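/- arXiv:2604.03966 — 3 statements merged into one kernel-verified Lean document; each statement's English description precedes it below -/
import Mathlib

section
/- Let p < q be primes and n = pq. Then the independent domination polynomial of the comaximal graph Γ(ℤ_n) is D_i(Γ(ℤ_n), x) = (pq − p − q + 1)·x + x^p + x^q. -/
/-!
By the Chinese remainder theorem `ℤ/pqℤ ≅ 𝔽_p × 𝔽_q`, and in a product of two fields distinct
`a, b` are comaximal unless they vanish in a common coordinate. Independent dominating sets are
the maximal independent sets, and here these are the singletons `{u}` of units (a unit is adjacent
to every other vertex) and the two coordinate axes `{0} × 𝔽_q` and `𝔽_p × {0}`, of sizes `q`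
and `p`. There are `(p - 1)(q - 1)` units.
-/

open Polynomial

/-- The comaximal graph of `ℤ/nℤ`: distinct `a, b` are adjacent iff the ideal
generated by `a` and `b` is the whole ring. -/
def comaximalGraph (n : ℕ) : SimpleGraph (ZMod n) where
  Adj a b := a ≠ b ∧ Ideal.span ({a, b} : Set (ZMod n)) = ⊤
  symm := by
    constructor
    rintro a b ⟨hab, h⟩
    refine ⟨hab.symm, ?_⟩
    rwa [Set.pair_comm]
  loopless := by
    constructor
    rintro a ⟨h, -⟩
    exact h rfl

/-- `S` is an independent dominating set of `G`. -/
def IsIndepDomSet {V : Type*} (G : SimpleGraph V) (S : Finset V) : Prop :=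
  (∀ a ∈ S, ∀ b ∈ S, ¬ G.Adj a b) ∧ ∀ v : V, v ∉ S → ∃ u ∈ S, G.Adj u v

/-- The independent domination polynomial `D_i(G, x) = Σ_k d_i(G,k) x^k`. -/
noncomputable def indepDomPoly {V : Type*} (G : SimpleGraph V) : Polynomial ℝ :=
  ∑ k ∈ Finset.range (Nat.card V + 1),
    Polynomial.C ((Nat.card {S : Finset V // IsIndepDomSet G S ∧ S.card = k}) : ℝ) *
      Polynomial.X ^ k

/-- The independence polynomial `I(G, x) = Σ_k c_k x^k`. -/
noncomputable def indepPoly {V : Type*} (G : SimpleGraph V) : Polynomial ℝ :=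
  ∑ k ∈ Finset.range (Nat.card V + 1),
    Polynomial.C ((Nat.card {S : Finset V //
        (∀ a ∈ S, ∀ b ∈ S, ¬ G.Adj a b) ∧ S.card = k}) : ℝ) *
      Polynomial.X ^ k

section IndepDomSet

variable {V W : Type*}

theorem IsIndepDomSet.eq_of_subset {G : SimpleGraph V} {S T : Finset V}
    (hS : IsIndepDomSet G S) (hT : ∀ a ∈ T, ∀ b ∈ T, ¬G.Adj a b) (hST : S ⊆ T) : S = T := by
  refine hST.antisymm fun v hvT => ?_
  by_contra hvS
  obtain ⟨u, huS, huv⟩ := hS.2 v hvS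
  exact hT u (hST huS) v hvT huv

theorem isIndepDomSet_of_forall_adj {G : SimpleGraph V} {S : Finset V} {w : V}
    (hS : ∀ a ∈ S, ∀ b ∈ S, ¬G.Adj a b) (hw : w ∈ S) (hadj : ∀ v ∉ S, G.Adj w v) :
    IsIndepDomSet G S :=
  ⟨hS, fun v hv => ⟨w, hw, hadj v hv⟩⟩

theorem isIndepDomSet_finsetCongr_iff {G : SimpleGraph V} {H : SimpleGraph W} (e : G ≃g H)
    (S : Finset V) : IsIndepDomSet H (e.toEquiv.finsetCongr S) ↔ IsIndepDomSet G S := by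
  have he (v : V) : e.toEquiv.symm (e v) = v := e.symm_apply_apply v
  simp [IsIndepDomSet, e.surjective.forall, e.surjective.exists, he, e.map_adj_iff]

theorem indepDomPoly_congr {G : SimpleGraph V} {H : SimpleGraph W} (e : G ≃g H) :
    indepDomPoly G = indepDomPoly H := by
  unfold indepDomPoly
  rw [Nat.card_congr e.toEquiv]
  refine Finset.sum_congr rfl fun k _ => ?_
  congr 3
  exact Nat.card_congr <| (Equiv.finsetCongr e.toEquiv).subtypeEquiv fun S => by
    rw [isIndepDomSet_finsetCongr_iff, Equiv.finsetCongr_apply, Finset.card_map]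

theorem indepDomPoly_eq_sum [Fintype V] (G : SimpleGraph V) [DecidablePred (IsIndepDomSet G)] :
    indepDomPoly G = ∑ S ∈ Finset.univ.filter (IsIndepDomSet G), X ^ S.card := by
  classical
  unfold indepDomPoly
  rw [Nat.card_eq_fintype_card, ← Finset.sum_fiberwise_of_maps_to (g := Finset.card)
    (t := Finset.range (Fintype.card V + 1))]
  · refine Finset.sum_congr rfl fun k _ => ?_
    rw [Finset.sum_congr rfl fun S hS => by rw [(Finset.mem_filter.1 hS).2], Finset.sum_const,
      Finset.filter_filter, nsmul_eq_mul, Nat.card_eq_fintype_card, Fintype.card_subtype,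
      map_natCast]
  · intro S _
    exact Finset.mem_range_succ_iff.2 S.card_le_univ

end IndepDomSet

theorem Ideal.span_pair_eq_top_iff {R : Type*} [CommSemiring R] (a b : R) :
    Ideal.span ({a, b} : Set R) = ⊤ ↔ IsCoprime a b := by
  rw [Ideal.eq_top_iff_one, Ideal.mem_span_pair]
  rfl

theorem Prod.isCoprime_iff {R S : Type*} [CommSemiring R] [CommSemiring S] (x y : R × S) :
    IsCoprime x y ↔ IsCoprime x.1 y.1 ∧ IsCoprime x.2 y.2 := by
  refine ⟨fun h => ⟨h.map (RingHom.fst R S), h.map (RingHom.snd R S)⟩, ?_⟩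
  rintro ⟨⟨u₁, v₁, h₁⟩, ⟨u₂, v₂, h₂⟩⟩
  exact ⟨(u₁, u₂), (v₁, v₂), Prod.ext h₁ h₂⟩

namespace SimpleGraph

def comaximal (R : Type*) [CommSemiring R] : SimpleGraph R where
  Adj a b := a ≠ b ∧ IsCoprime a b
  symm := ⟨fun _ _ h => ⟨h.1.symm, h.2.symm⟩⟩
  loopless := ⟨fun _ h => h.1 rfl⟩

theorem comaximal_adj {R : Type*} [CommSemiring R] {a b : R} :
    (comaximal R).Adj a b ↔ a ≠ b ∧ IsCoprime a b :=
  Iff.rfl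

def comaximalCongr {R S : Type*} [CommSemiring R] [CommSemiring S] (e : R ≃+* S) :
    comaximal R ≃g comaximal S where
  toEquiv := e.toEquiv
  map_rel_iff' {a b} := by
    refine and_congr e.injective.ne_iff ⟨fun h => ?_, fun h => h.map e.toRingHom⟩
    simpa using h.map e.symm.toRingHom

end SimpleGraph

theorem comaximalGraph_eq_comaximal (n : ℕ) :
    comaximalGraph n = SimpleGraph.comaximal (ZMod n) := by
  ext a b
  exact and_congr Iff.rfl (Ideal.span_pair_eq_top_iff a b)

namespace SimpleGraph

open Finset

section ProdSemifield

variable {K L : Type*} [Semifield K] [Semifield L]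

theorem comaximal_prod_adj_iff {a b : K × L} :
    (comaximal (K × L)).Adj a b ↔ a ≠ b ∧ (a.1 ≠ 0 ∨ b.1 ≠ 0) ∧ (a.2 ≠ 0 ∨ b.2 ≠ 0) := by
  rw [comaximal_adj, Prod.isCoprime_iff, Semifield.isCoprime_iff, Semifield.isCoprime_iff]

variable [Fintype K] [Fintype L]

theorem isIndepDomSet_comaximal_prod_iff [DecidableEq K] [DecidableEq L] (S : Finset (K × L)) :
    IsIndepDomSet (comaximal (K × L)) S ↔
      (∃ u ∈ ({0}ᶜ ×ˢ {0}ᶜ : Finset (K × L)), S = {u}) ∨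
        S = {0} ×ˢ univ ∨ S = univ ×ˢ {0} := by
  have indep_fst : ∀ a ∈ ({0} ×ˢ univ : Finset (K × L)), ∀ b ∈ ({0} ×ˢ univ : Finset (K × L)),
      ¬(comaximal (K × L)).Adj a b := by
    simp +contextual [comaximal_prod_adj_iff]
  have indep_snd : ∀ a ∈ (univ ×ˢ {0} : Finset (K × L)), ∀ b ∈ (univ ×ˢ {0} : Finset (K × L)),
      ¬(comaximal (K × L)).Adj a b := by
    simp +contextual [comaximal_prod_adj_iff]
  constructor
  · intro hS
    by_cases hfst : S ⊆ {0} ×ˢ univ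
    · exact Or.inr (Or.inl (hS.eq_of_subset indep_fst hfst))
    by_cases hsnd : S ⊆ univ ×ˢ {0}
    · exact Or.inr (Or.inr (hS.eq_of_subset indep_snd hsnd))
    obtain ⟨a, haS, ha⟩ := not_subset.1 hfst
    obtain ⟨b, hbS, hb⟩ := not_subset.1 hsnd
    simp only [mem_product, mem_singleton, mem_univ, and_true, true_and] at ha hb
    obtain rfl : a = b := by
      by_contra hab
      exact hS.1 a haS b hbS (comaximal_prod_adj_iff.2 ⟨hab, Or.inl ha, Or.inr hb⟩)
    refine Or.inl ⟨a, by simp [ha, hb], eq_singleton_iff_unique_mem.2 ⟨haS, fun x hx => ?_⟩⟩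
    by_contra hxa
    exact hS.1 a haS x hx (comaximal_prod_adj_iff.2 ⟨Ne.symm hxa, Or.inl ha, Or.inl hb⟩)
  · rintro (⟨u, hu, rfl⟩ | rfl | rfl)
    · refine isIndepDomSet_of_forall_adj (by simp) (mem_singleton_self u) fun v hv => ?_
      simp only [mem_product, mem_compl, mem_singleton] at hu
      exact comaximal_prod_adj_iff.2 ⟨Ne.symm (notMem_singleton.1 hv), Or.inl hu.1, Or.inl hu.2⟩
    · refine isIndepDomSet_of_forall_adj indep_fst (w := (0, 1)) (by simp) fun v hv => ?_
      simp only [mem_product, mem_singleton, mem_univ, and_true] at hv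
      exact comaximal_prod_adj_iff.2 ⟨fun h => hv (h ▸ rfl), Or.inr hv, Or.inl one_ne_zero⟩
    · refine isIndepDomSet_of_forall_adj indep_snd (w := (1, 0)) (by simp) fun v hv => ?_
      simp only [mem_product, mem_singleton, mem_univ, true_and] at hv
      exact comaximal_prod_adj_iff.2 ⟨fun h => hv (h ▸ rfl), Or.inl one_ne_zero, Or.inr hv⟩

theorem indepDomPoly_comaximal_prod :
    indepDomPoly (comaximal (K × L)) =
      C (((Fintype.card K - 1) * (Fintype.card L - 1) : ℕ) : ℝ) * X +
        X ^ Fintype.card K + X ^ Fintype.card L := by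
  classical
  set A : Finset (K × L) := {0} ×ˢ univ
  set B : Finset (K × L) := univ ×ˢ {0}
  set U : Finset (K × L) := {0}ᶜ ×ˢ {0}ᶜ
  have hA : #A = Fintype.card L := by simp [A]
  have hB : #B = Fintype.card K := by simp [B]
  have hU : #U = (Fintype.card K - 1) * (Fintype.card L - 1) := by simp [U, card_compl]
  have hAB : A ≠ B := fun h => by
    have : ((0, 1) : K × L) ∈ B := h ▸ by simp [A]
    simp [B] at this
  have not_singleton {T : Finset (K × L)} (hT : 1 < #T) :
      T ∉ U.map ⟨singleton, singleton_injective⟩ := fun h => by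
    obtain ⟨u, -, rfl⟩ := mem_map.1 h
    simp at hT
  have hset : univ.filter (IsIndepDomSet (comaximal (K × L))) =
      insert A (insert B (U.map ⟨singleton, singleton_injective⟩)) := by
    ext S
    simp only [mem_filter, mem_univ, true_and, isIndepDomSet_comaximal_prod_iff, mem_insert,
      mem_map, Function.Embedding.coeFn_mk, eq_comm (b := S)]
    exact or_rotate
  rw [indepDomPoly_eq_sum, hset, sum_insert, sum_insert, sum_map]
  · simp only [Function.Embedding.coeFn_mk, card_singleton, sum_const, hA, hB, hU, nsmul_eq_mul,
      map_natCast]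
    ring
  · exact not_singleton (hB ▸ Fintype.one_lt_card)
  · simp only [mem_insert, not_or]
    exact ⟨hAB, not_singleton (hA ▸ Fintype.one_lt_card)⟩

end ProdSemifield

end SimpleGraph

/-- For `n = pq` with primes `p < q`,
`D_i(Γ(ℤ_n), x) = (pq − p − q + 1)·x + x^p + x^q`. -/
theorem stmt_3 (p q : ℕ) (hp : p.Prime) (hq : q.Prime) (hpq : p < q) :
    indepDomPoly (comaximalGraph (p * q)) =
      Polynomial.C ((p * q - p - q + 1 : ℕ) : ℝ) * Polynomial.X +
        Polynomial.X ^ p + Polynomial.X ^ q := by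
  have : Fact p.Prime := ⟨hp⟩
  have : Fact q.Prime := ⟨hq⟩
  have hcop : p.Coprime q := (Nat.coprime_primes hp hq).2 hpq.ne
  have hcount : p * q - p - q + 1 = (p - 1) * (q - 1) := by
    have := add_le_mul hp.two_le hq.two_le
    rw [Nat.sub_one_mul, Nat.mul_sub_one]
    omega
  rw [comaximalGraph_eq_comaximal,
    indepDomPoly_congr (SimpleGraph.comaximalCongr (ZMod.chineseRemainder hcop)),
    SimpleGraph.indepDomPoly_comaximal_prod, ZMod.card, ZMod.card, hcount]
end

section
/- Let p < q be primes, let n₁, n₂ ≥ 1 be integers, and set n = p^{n₁} q^{n₂}. Then the independence polynomial of the comaximal graph Γ(ℤ_n) is I(Γ(ℤ_n), x) = φ(n)·x + (1 + x)^{p^{n₁−1} q^{n₂}} + (1 + x)^{p^{n₁} q^{n₂−1}} − (1 + x)^{p^{n₁−1} q^{n₂−1}}. -/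
open Polynomial

/-!
The nonunits of `ℤ_n` all lie in the maximal ideals `(p)` and `(q)`, and two elements are
comaximal unless both lie in `(p)` or both lie in `(q)`: if `a ∈ (p) \ (q)` and `b ∈ (q) \ (p)`
then `a + b` lies in neither ideal, so it is a unit. Hence the independent sets of `Γ(ℤ_n)` are
the subsets of `(p)`, the subsets of `(q)` and the singletons of units, and inclusion–exclusion
over the two powersets gives the formula, with `|(p)| = n/p`, `|(q)| = n/q`, `|(p) ∩ (q)| = n/pq`.
-/

open Finset

theorem indepPoly_eq_sum {V : Type*} [Fintype V] (G : SimpleGraph V) (F : Finset (Finset V))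
    (hF : ∀ S, S ∈ F ↔ ∀ a ∈ S, ∀ b ∈ S, ¬ G.Adj a b) :
    indepPoly G = ∑ S ∈ F, X ^ S.card := by
  classical
  rw [indepPoly, ← sum_fiberwise_of_maps_to' (g := card) (t := range (Nat.card V + 1))
    fun S _ => mem_range_succ_iff.2 (Nat.card_eq_fintype_card (α := V) ▸ card_le_univ S)]
  refine sum_congr rfl fun k _ => ?_
  rw [sum_const, nsmul_eq_mul, ← map_natCast C, Nat.card_eq_fintype_card, Fintype.card_subtype]
  congr 4
  ext S
  simp [hF]

theorem sum_powerset_pow_card {R ι : Type*} [CommSemiring R] (x : R) (s : Finset ι) :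
    ∑ t ∈ s.powerset, x ^ t.card = (x + 1) ^ s.card := by
  simpa using sum_pow_mul_eq_add_pow x 1 s

theorem comaximalGraph_adj_iff {n : ℕ} {a b : ZMod n} :
    (comaximalGraph n).Adj a b ↔ a ≠ b ∧ IsCoprime a b := by
  show _ ∧ _ ↔ _
  rw [Ideal.eq_top_iff_one, Ideal.mem_span_pair]
  rfl

section IsCoprime

variable {R : Type*} [CommRing R] {a b : R}

theorem isCoprime_of_isUnit_left (ha : IsUnit a) (b : R) : IsCoprime a b := by
  obtain ⟨u, rfl⟩ := ha
  exact ⟨↑u⁻¹, 0, by simp⟩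

theorem isCoprime_of_isUnit_add (h : IsUnit (a + b)) : IsCoprime a b := by
  obtain ⟨u, hu⟩ := h
  exact ⟨↑u⁻¹, ↑u⁻¹, by rw [← mul_add, ← hu, Units.inv_mul]⟩

theorem not_isCoprime_of_mem {I : Ideal R} (hI : I ≠ ⊤) (ha : a ∈ I) (hb : b ∈ I) :
    ¬IsCoprime a b := by
  rintro ⟨u, v, huv⟩
  exact hI (I.eq_top_iff_one.2 (huv ▸ I.add_mem (I.mul_mem_left u ha) (I.mul_mem_left v hb)))

variable {I J : Ideal R} (hcover : ∀ x, ¬IsUnit x → x ∈ I ∨ x ∈ J)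
include hcover

theorem isCoprime_of_mem_of_mem (haI : a ∈ I) (haJ : a ∉ J) (hbJ : b ∈ J) (hbI : b ∉ I) :
    IsCoprime a b := by
  refine isCoprime_of_isUnit_add (not_not.1 fun hab => ?_)
  rcases hcover _ hab with h | h
  · exact hbI (by simpa using I.sub_mem h haI)
  · exact haJ (by simpa using J.sub_mem h hbJ)

theorem isCoprime_iff_of_nonunits_subset (hI : I ≠ ⊤) (hJ : J ≠ ⊤) :
    IsCoprime a b ↔ ¬(a ∈ I ∧ b ∈ I) ∧ ¬(a ∈ J ∧ b ∈ J) := by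
  refine ⟨fun h => ⟨fun ⟨ha, hb⟩ => not_isCoprime_of_mem hI ha hb h,
    fun ⟨ha, hb⟩ => not_isCoprime_of_mem hJ ha hb h⟩, fun ⟨hnI, hnJ⟩ => ?_⟩
  by_cases ha : IsUnit a
  · exact isCoprime_of_isUnit_left ha b
  by_cases hb : IsUnit b
  · exact (isCoprime_of_isUnit_left hb a).symm
  rcases hcover a ha with haI | haJ <;> rcases hcover b hb with hbI | hbJ
  · exact (hnI ⟨haI, hbI⟩).elim
  · exact isCoprime_of_mem_of_mem hcover haI (fun haJ => hnJ ⟨haJ, hbJ⟩) hbJ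
      (fun hbI => hnI ⟨haI, hbI⟩)
  · exact (isCoprime_of_mem_of_mem hcover hbI (fun hbJ => hnJ ⟨haJ, hbJ⟩) haJ
      (fun haI => hnI ⟨haI, hbI⟩)).symm
  · exact (hnJ ⟨haJ, hbJ⟩).elim

theorem pairwise_not_isCoprime_iff_of_nonunits_subset (hI : I ≠ ⊤) (hJ : J ≠ ⊤)
    (S : Finset R) :
    (∀ a ∈ S, ∀ b ∈ S, a ≠ b → ¬IsCoprime a b) ↔
      (∀ a ∈ S, a ∈ I) ∨ (∀ a ∈ S, a ∈ J) ∨ ∃ u : Rˣ, S = {(u : R)} := by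
  constructor
  · intro h
    by_cases hunit : ∃ u ∈ S, IsUnit u
    · obtain ⟨u, huS, hu⟩ := hunit
      refine Or.inr (Or.inr ⟨hu.unit, eq_singleton_iff_unique_mem.2 ⟨huS, fun b hb => ?_⟩⟩)
      by_contra hbu
      exact h u huS b hb (Ne.symm hbu) (isCoprime_of_isUnit_left hu b)
    push Not at hunit
    by_cases hSI : ∀ a ∈ S, a ∈ I
    · exact Or.inl hSI
    push Not at hSI
    obtain ⟨x, hxS, hxI⟩ := hSI
    refine Or.inr (Or.inl fun y hyS => ?_)
    by_cases hyx : y = x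
    · exact hyx ▸ (hcover x (hunit x hxS)).resolve_left hxI
    have hxy := h x hxS y hyS (Ne.symm hyx)
    rw [isCoprime_iff_of_nonunits_subset hcover hI hJ, not_and_or, not_not, not_not] at hxy
    exact (hxy.resolve_left fun h => hxI h.1).2
  · rintro (hS | hS | ⟨u, rfl⟩) a ha b hb hab
    · exact not_isCoprime_of_mem hI (hS a ha) (hS b hb)
    · exact not_isCoprime_of_mem hJ (hS a ha) (hS b hb)
    · rw [mem_singleton] at ha hb
      exact (hab (ha.trans hb.symm)).elim

end IsCoprime

theorem indepPoly_comaximalGraph_of_nonunits_subset {n : ℕ} [NeZero n] {I J : Ideal (ZMod n)}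
    (hcover : ∀ x, ¬IsUnit x → x ∈ I ∨ x ∈ J) (hI : I ≠ ⊤) (hJ : J ≠ ⊤) :
    indepPoly (comaximalGraph n) =
      C (n.totient : ℝ) * X + (1 + X) ^ Nat.card I + (1 + X) ^ Nat.card J -
        (1 + X) ^ Nat.card ↥(I ⊓ J) := by
  classical
  set sI := (I : Set (ZMod n)).toFinset
  set sJ := (J : Set (ZMod n)).toFinset
  set sIJ := ((I ⊓ J : Ideal (ZMod n)) : Set (ZMod n)).toFinset
  set units : Finset (Finset (ZMod n)) := univ.map
    ⟨fun u : (ZMod n)ˣ => {(u : ZMod n)}, singleton_injective.comp Units.val_injective⟩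
  have hindep (S : Finset (ZMod n)) : S ∈ sI.powerset ∪ sJ.powerset ∪ units ↔
      ∀ a ∈ S, ∀ b ∈ S, ¬(comaximalGraph n).Adj a b := by
    simp only [comaximalGraph_adj_iff, not_and,
      pairwise_not_isCoprime_iff_of_nonunits_subset hcover hI hJ]
    simp [sI, sJ, units, subset_iff, eq_comm]
  have hdisj : Disjoint (sI.powerset ∪ sJ.powerset) units := by
    simp only [disjoint_right, units, mem_map, mem_univ, true_and, Function.Embedding.coeFn_mk]
    rintro _ ⟨u, rfl⟩
    simp only [mem_union, mem_powerset, singleton_subset_iff, sI, sJ, Set.mem_toFinset,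
      SetLike.mem_coe, not_or]
    exact ⟨fun h => hI (I.eq_top_of_isUnit_mem h u.isUnit),
      fun h => hJ (J.eq_top_of_isUnit_mem h u.isUnit)⟩
  have hinter : sI.powerset ∩ sJ.powerset = sIJ.powerset := by
    ext S
    simp only [mem_inter, mem_powerset, subset_iff, sI, sJ, sIJ, Set.mem_toFinset, SetLike.mem_coe,
      Ideal.mem_inf, ← forall_and]
  have hunits : ∑ S ∈ units, (X : ℝ[X]) ^ S.card = C (n.totient : ℝ) * X := by
    simp [units, ZMod.card_units_eq_totient]
  have hpowersets := sum_union_inter (s₁ := sI.powerset) (s₂ := sJ.powerset)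
    (f := fun S => (X : ℝ[X]) ^ S.card)
  simp only [hinter, sum_powerset_pow_card] at hpowersets
  have hcard (K : Ideal (ZMod n)) : Nat.card K = (K : Set (ZMod n)).toFinset.card :=
    Nat.card_eq_card_toFinset (K : Set (ZMod n))
  rw [indepPoly_eq_sum _ _ hindep, sum_union hdisj, hunits, hcard, hcard, hcard]
  linear_combination hpowersets

namespace ZMod

theorem mem_ker_castHom_iff {n m : ℕ} [NeZero n] (h : m ∣ n) (x : ZMod n) :
    x ∈ RingHom.ker (castHom h (ZMod m)) ↔ m ∣ x.val := by
  rw [RingHom.mem_ker, castHom_apply, cast_eq_val, natCast_eq_zero_iff]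

theorem card_ker_castHom {n m k : ℕ} (hm : 0 < m) (h : m * k = n) :
    Nat.card (RingHom.ker (castHom (Dvd.intro k h) (ZMod m))) = k := by
  have hcard := (castHom (Dvd.intro k h) (ZMod m)).toAddMonoidHom.ker.card_mul_index
  rw [AddSubgroup.index_ker, AddMonoidHom.range_eq_top.2 (castHom_surjective (Dvd.intro k h)),
    AddSubgroup.card_top, Nat.card_zmod, Nat.card_zmod] at hcard
  exact Nat.eq_of_mul_eq_mul_right hm (hcard.trans (h.symm.trans (mul_comm m k)))

theorem ker_castHom_inf_ker_castHom {n p q : ℕ} [NeZero n] (hp : p ∣ n) (hq : q ∣ n)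
    (hpq : p * q ∣ n) (hcop : p.Coprime q) :
    RingHom.ker (castHom hp (ZMod p)) ⊓ RingHom.ker (castHom hq (ZMod q)) =
      RingHom.ker (castHom hpq (ZMod (p * q))) := by
  ext x
  simp only [Ideal.mem_inf, mem_ker_castHom_iff]
  exact ⟨fun ⟨hpx, hqx⟩ => hcop.mul_dvd_of_dvd_of_dvd hpx hqx,
    fun h => ⟨dvd_of_mul_right_dvd h, dvd_of_mul_left_dvd h⟩⟩

theorem dvd_val_or_dvd_val_of_not_isUnit {p q a b : ℕ} (hp : p.Prime) (hq : q.Prime)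
    {x : ZMod (p ^ a * q ^ b)} (hx : ¬IsUnit x) : p ∣ x.val ∨ q ∣ x.val := by
  have : NeZero (p ^ a * q ^ b) := ⟨(Nat.mul_pos (pow_pos hp.pos a) (pow_pos hq.pos b)).ne'⟩
  rw [← natCast_zmod_val x, isUnit_iff_coprime] at hx
  by_contra! h
  exact hx (Nat.Coprime.mul_right ((hp.coprime_iff_not_dvd.2 h.1).symm.pow_right a)
    ((hq.coprime_iff_not_dvd.2 h.2).symm.pow_right b))

end ZMod

/-- For `n = p^{n₁} q^{n₂}` with primes `p < q` and `n₁, n₂ ≥ 1`,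
`I(Γ(ℤ_n), x) = φ(n)·x + (1+x)^(p^{n₁−1} q^{n₂}) + (1+x)^(p^{n₁} q^{n₂−1}) − (1+x)^(p^{n₁−1} q^{n₂−1})`. -/
theorem stmt_17 (p q n₁ n₂ : ℕ) (hp : p.Prime) (hq : q.Prime) (hpq : p < q)
    (h1 : 1 ≤ n₁) (h2 : 1 ≤ n₂) :
    indepPoly (comaximalGraph (p ^ n₁ * q ^ n₂)) =
      Polynomial.C ((Nat.totient (p ^ n₁ * q ^ n₂) : ℝ)) * Polynomial.X +
        (1 + Polynomial.X) ^ (p ^ (n₁ - 1) * q ^ n₂) +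
        (1 + Polynomial.X) ^ (p ^ n₁ * q ^ (n₂ - 1)) -
        (1 + Polynomial.X) ^ (p ^ (n₁ - 1) * q ^ (n₂ - 1)) := by
  obtain ⟨a, rfl⟩ : ∃ a, n₁ = a + 1 := ⟨n₁ - 1, by omega⟩
  obtain ⟨b, rfl⟩ : ∃ b, n₂ = b + 1 := ⟨n₂ - 1, by omega⟩
  simp only [Nat.add_sub_cancel]
  set n := p ^ (a + 1) * q ^ (b + 1)
  have : NeZero n := ⟨(Nat.mul_pos (pow_pos hp.pos _) (pow_pos hq.pos _)).ne'⟩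
  have := Fact.mk hp
  have := Fact.mk hq
  have hpn : p * (p ^ a * q ^ (b + 1)) = n := by ring
  have hqn : q * (p ^ (a + 1) * q ^ b) = n := by ring
  have hpqn : p * q * (p ^ a * q ^ b) = n := by ring
  have hcover (x : ZMod n) (hx : ¬IsUnit x) :
      x ∈ RingHom.ker (ZMod.castHom (Dvd.intro _ hpn) (ZMod p)) ∨
        x ∈ RingHom.ker (ZMod.castHom (Dvd.intro _ hqn) (ZMod q)) := by
    simpa only [ZMod.mem_ker_castHom_iff] using ZMod.dvd_val_or_dvd_val_of_not_isUnit hp hq hx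
  rw [indepPoly_comaximalGraph_of_nonunits_subset hcover (RingHom.ker_ne_top _)
      (RingHom.ker_ne_top _),
    ZMod.ker_castHom_inf_ker_castHom _ _ (Dvd.intro _ hpqn) ((Nat.coprime_primes hp hq).2 hpq.ne),
    ZMod.card_ker_castHom hp.pos hpn, ZMod.card_ker_castHom hq.pos hqn,
    ZMod.card_ker_castHom (Nat.mul_pos hp.pos hq.pos) hpqn]
end

section
/- Let n ≥ 2 be an integer, let rad(n) denote the radical of n (the product of the distinct primes dividing n), and let H be the induced subgraph of the comaximal graph Γ(ℤ_n) on the vertex set {x ∈ ℤ_n : x ≠ 0, x is not a unit of ℤ_n, and rad(n) does not divide the canonical representative of x}. Then I(Γ(ℤ_n), x) = φ(n)·x + (1 + x)^{n/rad(n)} · I(H, x). -/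
open Polynomial

/-- The radical of a natural number: the product of its distinct prime divisors. -/
def natRadical (n : ℕ) : ℕ := n.primeFactors.prod id

/-!
A unit of `ℤ_n` is adjacent to every other vertex, so an independent set containing a unit is a
singleton: these contribute `φ(n)·x`. A residue whose representative is divisible by `rad n` is
nilpotent, and a nilpotent `a` and a non-unit `b` never generate the unit ideal (from
`c a + d b = 1`, `d b = 1 - c a` would be a unit). So among the non-units the `n / rad n`
nilpotents are isolated, each contributing a factor `1 + x`, and the other non-units are the
vertices of `H`.
-/

open Finset

namespace SimpleGraph

open Classical

variable {V : Type*} (G : SimpleGraph V)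

-- A named predicate, so that under `Classical` its decidability instance is always the same.
def IsIndepFinset (S : Finset V) : Prop := ∀ a ∈ S, ∀ b ∈ S, ¬ G.Adj a b

noncomputable def indepPolyOn (s : Finset V) : ℝ[X] :=
  ∑ S ∈ s.powerset with G.IsIndepFinset S, X ^ #S

theorem indepPoly_eq_indepPolyOn_univ [Fintype V] : indepPoly G = G.indepPolyOn univ := by
  rw [indepPolyOn, powerset_univ, ← sum_fiberwise_of_maps_to (g := card)
    (t := range (Nat.card V + 1)) fun S _ => by simpa [Nat.lt_succ_iff] using card_le_univ S]
  refine sum_congr rfl fun k _ => ?_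
  rw [filter_filter,
    sum_congr rfl fun S hS => by simp only [mem_filter] at hS; rw [hS.2.2], sum_const, nsmul_eq_mul,
    ← C_eq_natCast, Nat.card_eq_fintype_card, Fintype.card_subtype]
  congr

theorem indepPoly_induce (W : Set V) [Fintype W] :
    indepPoly (G.induce W) = G.indepPolyOn W.toFinset := by
  have hW : W.toFinset = univ.map (Function.Embedding.subtype (· ∈ W)) := by
    ext; simp
  have hpow : W.toFinset.powerset =
      (univ : Finset (Finset W)).map (mapEmbedding (Function.Embedding.subtype _)).toEmbedding := by
    ext S
    simp [hW, subset_map_iff, eq_comm]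
  rw [indepPoly_eq_indepPolyOn_univ, indepPolyOn, indepPolyOn, hpow, filter_map, sum_map,
    powerset_univ]
  refine sum_congr ?_ fun S _ => by simp
  ext S
  simp only [mem_filter, mem_univ, true_and, Function.comp_apply]
  simp [IsIndepFinset]

variable [DecidableEq V]

theorem indepPolyOn_eq_of_forall_adj {s U : Finset V} (hUs : U ⊆ s)
    (hU : ∀ u ∈ U, ∀ v, u ≠ v → G.Adj u v) :
    G.indepPolyOn s = C (#U : ℝ) * X + G.indepPolyOn (s \ U) := by
  have hmeet : {S ∈ s.powerset | G.IsIndepFinset S ∧ ¬ Disjoint S U} =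
      U.map ⟨singleton, singleton_injective⟩ := by
    ext S
    simp only [mem_filter, mem_powerset, mem_map, Function.Embedding.coeFn_mk,
      not_disjoint_iff]
    constructor
    · rintro ⟨-, hS, u, huS, huU⟩
      refine ⟨u, huU, (eq_singleton_iff_unique_mem.mpr ⟨huS, fun b hb => ?_⟩).symm⟩
      by_contra hbu
      exact hS u huS b hb (hU u huU b (Ne.symm hbu))
    · rintro ⟨u, huU, rfl⟩
      refine ⟨singleton_subset_iff.mpr (hUs huU), ?_, u, mem_singleton_self u, huU⟩
      simp [IsIndepFinset]
  have hdisj : {S ∈ s.powerset | G.IsIndepFinset S ∧ Disjoint S U} =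
      {S ∈ (s \ U).powerset | G.IsIndepFinset S} := by
    ext S
    simp only [mem_filter, mem_powerset, subset_sdiff]
    tauto
  rw [indepPolyOn, ← sum_filter_not_add_sum_filter _ (Disjoint · U), filter_filter,
    filter_filter, hmeet, hdisj, sum_map, indepPolyOn]
  simp

theorem isIndepFinset_insert_iff {a : V} {t : Finset V} (h : ∀ b ∈ t, ¬ G.Adj a b) :
    G.IsIndepFinset (insert a t) ↔ G.IsIndepFinset t := by
  simp only [IsIndepFinset, forall_mem_insert, G.irrefl, not_false_eq_true, true_and]
  exact ⟨fun H b hb => (H.2 b hb).2,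
    fun H => ⟨h, fun b hb => ⟨fun hba => h b hb hba.symm, H b hb⟩⟩⟩

theorem indepPolyOn_insert_of_forall_not_adj {a : V} {s : Finset V} (ha : a ∉ s)
    (h : ∀ b ∈ s, ¬ G.Adj a b) :
    G.indepPolyOn (insert a s) = (1 + X) * G.indepPolyOn s := by
  simp only [indepPolyOn, sum_filter]
  rw [sum_powerset_insert ha, add_mul, one_mul, mul_sum]
  congr 1
  refine sum_congr rfl fun t ht => ?_
  rw [mem_powerset] at ht
  rw [G.isIndepFinset_insert_iff fun b hb => h b (ht hb),
    card_insert_of_notMem fun hat => ha (ht hat), pow_succ', mul_ite, mul_zero]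

theorem indepPolyOn_union_of_forall_not_adj {N W : Finset V} (hNW : Disjoint N W)
    (h : ∀ a ∈ N, ∀ b ∈ N ∪ W, ¬ G.Adj a b) :
    G.indepPolyOn (N ∪ W) = (1 + X) ^ #N * G.indepPolyOn W := by
  induction N using Finset.induction_on with
  | empty => simp
  | insert a N ha ih =>
    rw [disjoint_insert_left] at hNW
    rw [insert_union, G.indepPolyOn_insert_of_forall_not_adj (by simp [ha, hNW.1])
        fun b hb => h a (mem_insert_self a N) b (by simpa using Or.inr hb),
      ih hNW.2 fun x hx b hb => h x (mem_insert_of_mem hx) b (by simp at hb ⊢; tauto),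
      card_insert_of_notMem ha, pow_succ', mul_assoc]

end SimpleGraph

theorem Ideal.span_pair_ne_top_of_isNilpotent {R : Type*} [CommRing R] {a b : R}
    (ha : IsNilpotent a) (hb : ¬ IsUnit b) : Ideal.span {a, b} ≠ ⊤ := by
  intro h
  obtain ⟨c, d, hcd⟩ :=
    Ideal.mem_span_pair.mp (h ▸ Submodule.mem_top : (1 : R) ∈ Ideal.span {a, b})
  have hdb : IsUnit (d * b) :=
    eq_sub_of_add_eq' hcd ▸ ((Commute.all c a).isNilpotent_mul_left ha).isUnit_one_sub
  exact hb (isUnit_of_mul_isUnit_right hdb)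

theorem Finset.card_filter_isUnit (M : Type*) [Monoid M] [Fintype M] [Fintype Mˣ]
    [DecidablePred (IsUnit : M → Prop)] : #{x : M | IsUnit x} = Fintype.card Mˣ := by
  rw [← card_univ, ← card_map ⟨Units.val, Units.val_injective⟩]
  congr
  ext x
  simp only [mem_filter, mem_univ, true_and, mem_map, Function.Embedding.coeFn_mk]
  rfl

theorem natRadical_dvd (n : ℕ) : natRadical n ∣ n :=
  Nat.prod_primeFactors_dvd n

namespace ZMod

variable {n : ℕ} [NeZero n]

theorem isNilpotent_of_natRadical_dvd_val {x : ZMod n} (h : natRadical n ∣ x.val) :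
    IsNilpotent x := by
  refine ⟨n, ?_⟩
  have hdvd : n ∣ x.val ^ n :=
    (Nat.dvd_prod_primeFactors_pow_self (NeZero.ne n)).trans (pow_dvd_pow_of_dvd h n)
  rw [← natCast_zmod_val x, ← Nat.cast_pow, natCast_eq_zero_iff]
  exact hdvd

theorem card_filter_dvd_val {r : ℕ} (hr : r ∣ n) : #{x : ZMod n | r ∣ x.val} = n / r := by
  have hr0 : 0 < r := Nat.pos_of_dvd_of_pos hr (NeZero.pos n)
  calc #{x : ZMod n | r ∣ x.val} = #{k ∈ range n | r ∣ k} :=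
        card_nbij' val Nat.cast (fun x hx => by simpa [val_lt] using hx)
          (fun k hk => by simp_all [Nat.mod_eq_of_lt]) (fun x _ => natCast_zmod_val x)
          (fun k hk => val_cast_of_lt (mem_range.mp (mem_filter.mp hk).1))
    _ = n.count (· ≡ 0 [MOD r]) := by
        simp [Nat.count_eq_card_filter_range, Nat.modEq_zero_iff_dvd]
    _ = n / r := by simp [Nat.count_modEq_card n hr0 0, Nat.mod_eq_zero_of_dvd hr]

theorem card_filter_isUnit : #{x : ZMod n | IsUnit x} = Nat.totient n := by
  rw [Finset.card_filter_isUnit, card_units_eq_totient]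

end ZMod

theorem comaximalGraph_adj_of_isUnit {n : ℕ} {a b : ZMod n} (ha : IsUnit a) (hab : a ≠ b) :
    (comaximalGraph n).Adj a b :=
  ⟨hab, Ideal.eq_top_of_isUnit_mem _ (Ideal.subset_span (by simp)) ha⟩

theorem comaximalGraph_not_adj_of_isNilpotent {n : ℕ} {a b : ZMod n} (ha : IsNilpotent a)
    (hb : ¬ IsUnit b) : ¬ (comaximalGraph n).Adj a b :=
  fun h => Ideal.span_pair_ne_top_of_isNilpotent ha hb h.2

/-- For `n ≥ 2`, `I(Γ(ℤ_n), x) = φ(n)·x + (1 + x)^(n/rad n) · I(H, x)`, where `H` is the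
induced subgraph on nonzero non-units whose canonical representative is not divisible by
`rad n`. -/
theorem stmt_18 (n : ℕ) (hn : 2 ≤ n) :
    indepPoly (comaximalGraph n) =
      Polynomial.C ((Nat.totient n : ℝ)) * Polynomial.X +
        (1 + Polynomial.X) ^ (n / natRadical n) *
          indepPoly ((comaximalGraph n).induce
            {x : ZMod n | x ≠ 0 ∧ ¬ IsUnit x ∧ ¬ (natRadical n ∣ x.val)}) := by
  classical
  have : Fact (1 < n) := ⟨hn⟩
  set W : Set (ZMod n) := {x | x ≠ 0 ∧ ¬ IsUnit x ∧ ¬ (natRadical n ∣ x.val)}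
  set U : Finset (ZMod n) := {x | IsUnit x}
  set N : Finset (ZMod n) := {x | natRadical n ∣ x.val}
  have hN : ∀ x ∈ N, IsNilpotent x :=
    fun x hx => ZMod.isNilpotent_of_natRadical_dvd_val (mem_filter.mp hx).2
  have hsplit : univ \ U = N ∪ W.toFinset := by
    ext x
    by_cases hx : natRadical n ∣ x.val
    · simp [U, N, W, hx, (ZMod.isNilpotent_of_natRadical_dvd_val hx).not_isUnit]
    · have hx0 : x ≠ 0 := by rintro rfl; simp at hx
      simp [U, N, W, hx, hx0]
  have hNW : Disjoint N W.toFinset := by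
    simp +contextual [disjoint_left, N, W]
  have hnonunit : ∀ b ∈ N ∪ W.toFinset, ¬ IsUnit b := by
    simp [← hsplit, U]
  rw [SimpleGraph.indepPoly_eq_indepPolyOn_univ,
    SimpleGraph.indepPolyOn_eq_of_forall_adj _ (subset_univ U)
      fun u hu v huv => comaximalGraph_adj_of_isUnit (mem_filter.mp hu).2 huv,
    hsplit, SimpleGraph.indepPolyOn_union_of_forall_not_adj _ hNW
      fun a ha b hb => comaximalGraph_not_adj_of_isNilpotent (hN a ha) (hnonunit b hb),
    ← SimpleGraph.indepPoly_induce, ZMod.card_filter_isUnit,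
    ZMod.card_filter_dvd_val (natRadical_dvd n)]
end
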